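/- arXiv:2009.01049 — 3 statements merged into one kernel-verified Lean document; each statement's English description precedes it below -/
import Mathlib

section
/- With the definitions below, λ_{2j} = λ_{2j}^+ + λ_{2j}^- for 1 ≤ j ≤ m−1, and λ_{2k−1} = λ_{2k−1}^+ − λ_{2k−1}^- for 1 ≤ k ≤ m. -/
lemma sum_even_aux {M : Type*} [AddCommMonoid M] (n : ℕ) (g : ℕ → M)
    (h : ∀ k ∈ Finset.Icc 1 n, ¬ Even k → g k = 0) :
    ∑ k ∈ Finset.Icc 1 n, g k = ∑ k ∈ Finset.Icc 1 (n / 2), g (2 * k) := by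
  rw [← Finset.sum_filter_add_sum_filter_not (Finset.Icc 1 n) Even g]
  rw [Finset.sum_eq_zero (fun k hk => h k (Finset.mem_filter.mp hk).1 (Finset.mem_filter.mp hk).2), add_zero]
  apply Finset.sum_nbij' (fun k => k / 2) (fun k => 2 * k)
  · intro k hk
    simp only [Finset.mem_filter, Finset.mem_Icc] at hk ⊢
    obtain ⟨⟨h1, h2⟩, c, hc⟩ := hk
    omega
  · intro k hk
    simp only [Finset.mem_filter, Finset.mem_Icc] at hk ⊢
    exact ⟨⟨by omega, by omega⟩, ⟨k, by omega⟩⟩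
  · intro k hk
    simp only [Finset.mem_filter, Finset.mem_Icc] at hk
    obtain ⟨_, c, hc⟩ := hk
    omega
  · intro k hk; omega
  · intro k hk
    simp only [Finset.mem_filter, Finset.mem_Icc] at hk
    obtain ⟨_, c, hc⟩ := hk
    congr 1
    omega

lemma alpha_eq_gamma (m : ℕ) (hm : 1 ≤ m) (a b : ℕ → ℂ) (γ α : ℕ → ℂ)
    (hγ : ∀ j ∈ Finset.Icc 1 (m - 1),
      γ j = b (2 * j) - ∑ k ∈ Finset.Icc 1 (j - 1), (starRingEnd ℂ) (a (2 * (j - k))) * γ k)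
    (hα : ∀ j ∈ Finset.Icc 1 (2 * m - 1),
      α j = b j - (1 / 2 : ℂ) * ∑ k ∈ Finset.Icc 1 (j - 1),
        (1 + (-1 : ℂ) ^ (j - k)) * (starRingEnd ℂ) (a (j - k)) * α k) :
    ∀ j ∈ Finset.Icc 1 (m - 1), α (2 * j) = γ j := by
  intro j
  induction j using Nat.strong_induction_on with
  | _ j IH =>
  intro hj
  simp only [Finset.mem_Icc] at hj
  obtain ⟨hj1, hj2⟩ := hj
  have h2j : 2 * j ∈ Finset.Icc 1 (2 * m - 1) := by
    simp only [Finset.mem_Icc]; omega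
  rw [hα (2 * j) h2j, hγ j (by simp only [Finset.mem_Icc]; omega)]
  have hsum : ∑ k ∈ Finset.Icc 1 (2 * j - 1),
      (1 + (-1 : ℂ) ^ (2 * j - k)) * (starRingEnd ℂ) (a (2 * j - k)) * α k
      = ∑ k ∈ Finset.Icc 1 (j - 1),
        (1 + (-1 : ℂ) ^ (2 * j - 2 * k)) * (starRingEnd ℂ) (a (2 * j - 2 * k)) * α (2 * k) := by
    rw [sum_even_aux (2 * j - 1) _ ?_, show (2 * j - 1) / 2 = j - 1 by omega]
    intro k hk hke
    simp only [Finset.mem_Icc] at hk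
    have hodd : Odd (2 * j - k) :=
      Nat.odd_iff.mpr (by have := Nat.not_even_iff.mp hke; omega)
    rw [hodd.neg_one_pow]
    ring
  rw [hsum]
  congr 1
  rw [Finset.mul_sum]
  apply Finset.sum_congr rfl
  intro k hk
  simp only [Finset.mem_Icc] at hk
  have heven : Even (2 * j - 2 * k) := ⟨j - k, by omega⟩
  rw [heven.neg_one_pow]
  have hαk : α (2 * k) = γ k := IH k (by omega) (by simp only [Finset.mem_Icc]; omega)
  rw [hαk, show 2 * j - 2 * k = 2 * (j - k) by omega]
  ring

theorem lambda_split (m : ℕ) (hm : 1 ≤ m) (a b : ℕ → ℂ) (γ α : ℕ → ℂ)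
    (lam lamp lamm : ℕ → ℝ)
    (hγ : ∀ j ∈ Finset.Icc 1 (m - 1),
      γ j = b (2 * j) - ∑ k ∈ Finset.Icc 1 (j - 1), (starRingEnd ℂ) (a (2 * (j - k))) * γ k)
    (hlam_even : ∀ j ∈ Finset.Icc 1 (m - 1),
      lam (2 * j) = 2 * (a (2 * j)).im
        - 2 * ∑ k ∈ Finset.Icc 1 (j - 1), ((starRingEnd ℂ) (b (2 * (j - k))) * γ k).im)
    (hlam_odd : ∀ j ∈ Finset.Icc 1 m,
      lam (2 * j - 1) = 2 * (a (2 * j - 1)).im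
        + 2 * ∑ k ∈ Finset.Icc 1 (j - 1), ((starRingEnd ℂ) (b (2 * (j - k) - 1)) * γ k).im)
    (hα : ∀ j ∈ Finset.Icc 1 (2 * m - 1),
      α j = b j - (1 / 2 : ℂ) * ∑ k ∈ Finset.Icc 1 (j - 1),
        (1 + (-1 : ℂ) ^ (j - k)) * (starRingEnd ℂ) (a (j - k)) * α k)
    (hlamp : ∀ j ∈ Finset.Icc 1 (2 * m - 1),
      lamp j = 2 * (a j).im
        + ∑ k ∈ Finset.Icc 1 (j - 1), (-1 : ℝ) ^ (j - k + 1) * ((starRingEnd ℂ) (b (j - k)) * α k).im)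
    (hlamm : ∀ j ∈ Finset.Icc 1 (2 * m - 1),
      lamm j = - ∑ k ∈ Finset.Icc 1 (j - 1), ((starRingEnd ℂ) (b (j - k)) * α k).im) :
    (∀ j ∈ Finset.Icc 1 (m - 1), lam (2 * j) = lamp (2 * j) + lamm (2 * j)) ∧
      (∀ k ∈ Finset.Icc 1 m, lam (2 * k - 1) = lamp (2 * k - 1) - lamm (2 * k - 1)) := by
  have hag := alpha_eq_gamma m hm a b γ α hγ hα
  constructor
  · intro j hj
    have hj' := hj
    simp only [Finset.mem_Icc] at hj'
    obtain ⟨hj1, hj2⟩ := hj'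
    have h2j : 2 * j ∈ Finset.Icc 1 (2 * m - 1) := by simp only [Finset.mem_Icc]; omega
    rw [hlam_even j hj, hlamp (2 * j) h2j, hlamm (2 * j) h2j]
    have hsum : ∑ k ∈ Finset.Icc 1 (2 * j - 1),
        ((-1 : ℝ) ^ (2 * j - k + 1) * ((starRingEnd ℂ) (b (2 * j - k)) * α k).im)
        - ∑ k ∈ Finset.Icc 1 (2 * j - 1), ((starRingEnd ℂ) (b (2 * j - k)) * α k).im
        = ∑ k ∈ Finset.Icc 1 (j - 1),
            (-2) * ((starRingEnd ℂ) (b (2 * (j - k))) * γ k).im := by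
      rw [← Finset.sum_sub_distrib,
        sum_even_aux (2 * j - 1) _ ?_, show (2 * j - 1) / 2 = j - 1 by omega]
      · apply Finset.sum_congr rfl
        intro k hk
        simp only [Finset.mem_Icc] at hk
        have hodd : Odd (2 * j - 2 * k + 1) := ⟨j - k, by omega⟩
        rw [hodd.neg_one_pow,
          hag k (by simp only [Finset.mem_Icc]; omega),
          show 2 * j - 2 * k = 2 * (j - k) by omega]
        ring
      · intro k hk hke
        simp only [Finset.mem_Icc] at hk
        have heven : Even (2 * j - k + 1) :=
          Nat.even_iff.mpr (by have := Nat.not_even_iff.mp hke; omega)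
        rw [heven.neg_one_pow]
        ring
    rw [← Finset.mul_sum] at hsum
    linarith [hsum]
  · intro j hj
    have hj' := hj
    simp only [Finset.mem_Icc] at hj'
    obtain ⟨hj1, hj2⟩ := hj'
    have h2j : 2 * j - 1 ∈ Finset.Icc 1 (2 * m - 1) := by simp only [Finset.mem_Icc]; omega
    rw [hlam_odd j hj, hlamp (2 * j - 1) h2j, hlamm (2 * j - 1) h2j]
    have hsum : ∑ k ∈ Finset.Icc 1 (2 * j - 1 - 1),
        ((-1 : ℝ) ^ (2 * j - 1 - k + 1) * ((starRingEnd ℂ) (b (2 * j - 1 - k)) * α k).im)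
        + ∑ k ∈ Finset.Icc 1 (2 * j - 1 - 1), ((starRingEnd ℂ) (b (2 * j - 1 - k)) * α k).im
        = ∑ k ∈ Finset.Icc 1 (j - 1),
            2 * ((starRingEnd ℂ) (b (2 * (j - k) - 1)) * γ k).im := by
      rw [← Finset.sum_add_distrib,
        sum_even_aux (2 * j - 1 - 1) _ ?_, show (2 * j - 1 - 1) / 2 = j - 1 by omega]
      · apply Finset.sum_congr rfl
        intro k hk
        simp only [Finset.mem_Icc] at hk
        have heven : Even (2 * j - 1 - 2 * k + 1) := ⟨j - k, by omega⟩
        rw [heven.neg_one_pow,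
          hag k (by simp only [Finset.mem_Icc]; omega),
          show 2 * j - 1 - 2 * k = 2 * (j - k) - 1 by omega]
        ring
      · intro k hk hke
        simp only [Finset.mem_Icc] at hk
        have hodd : Odd (2 * j - 1 - k + 1) :=
          Nat.odd_iff.mpr (by have := Nat.not_even_iff.mp hke; omega)
        rw [hodd.neg_one_pow]
        ring
    rw [← Finset.mul_sum] at hsum
    linarith [hsum]
end

section
/- Assume λ_{2j} = 0 for all 1 ≤ j ≤ j*. Then Im a_{2j} = 0 and λ_{2j}^+ = 0 for all 1 ≤ j ≤ j*, and λ_n^- = 0 for all 1 ≤ n ≤ 2j* + 3. -/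
lemma sum_swap_tri {M : Type*} [AddCommMonoid M] (n : ℕ) (F : ℕ → ℕ → M) :
    ∑ k ∈ Finset.Icc 1 (n-1), ∑ k' ∈ Finset.Icc 1 (k-1), F (k - k') k'
    = ∑ d ∈ Finset.Icc 1 (n-2), ∑ k' ∈ Finset.Icc 1 (n-1-d), F d k' := by
  rw [Finset.sum_sigma', Finset.sum_sigma']
  refine Finset.sum_nbij' (fun p => ⟨p.1 - p.2, p.2⟩) (fun p => ⟨p.1 + p.2, p.2⟩) ?_ ?_ ?_ ?_ ?_
  · rintro ⟨k, k'⟩ h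
    simp only [Finset.mem_sigma, Finset.mem_Icc] at h
    refine Finset.mem_sigma.mpr ⟨?_, ?_⟩ <;> simp only [Finset.mem_Icc] <;> omega
  · rintro ⟨d, k'⟩ h
    simp only [Finset.mem_sigma, Finset.mem_Icc] at h
    refine Finset.mem_sigma.mpr ⟨?_, ?_⟩ <;> simp only [Finset.mem_Icc] <;> omega
  · rintro ⟨k, k'⟩ h
    simp only [Finset.mem_sigma, Finset.mem_Icc] at h
    show (⟨k - k' + k', k'⟩ : Σ _ : ℕ, ℕ) = ⟨k, k'⟩
    rw [show k - k' + k' = k from by omega]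
  · rintro ⟨d, k'⟩ h
    simp only [Finset.mem_sigma, Finset.mem_Icc] at h
    show (⟨d + k' - k', k'⟩ : Σ _ : ℕ, ℕ) = ⟨d, k'⟩
    rw [show d + k' - k' = d from by omega]
  · rintro ⟨k, k'⟩ h
    rfl

lemma imS_zero (B w α : ℕ → ℂ) (s : ℕ → ℝ) (P : ℕ → Prop)
    (hα : ∀ j, 1 ≤ j → α j = B j - ∑ k ∈ Finset.Icc 1 (j-1), w (j-k) * α k)
    (hP : ∀ n d, P n → 1 ≤ d → d + 2 ≤ n → w d ≠ 0 → (P (n - d) ∧ ∀ k, s (k + d) = s k))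
    (hsym : ∀ n k, P n → 1 ≤ k → k ≤ n - 1 → s (n - k) = s k)
    (hw : ∀ n d, P n → 1 ≤ d → d + 2 ≤ n → (w d).im = 0) :
    ∀ n, P n → ∑ k ∈ Finset.Icc 1 (n-1), s k * ((starRingEnd ℂ) (B (n-k)) * α k).im = 0 := by
  intro n
  induction n using Nat.strong_induction_on with
  | _ n IH =>
  intro hPn
  rcases lt_or_ge n 2 with hn | hn
  · interval_cases n <;> simp
  -- expand α via hα
  have expand : ∑ k ∈ Finset.Icc 1 (n-1), s k * ((starRingEnd ℂ) (B (n-k)) * α k).im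
      = (∑ k ∈ Finset.Icc 1 (n-1), s k * ((starRingEnd ℂ) (B (n-k)) * B k).im)
        - ∑ k ∈ Finset.Icc 1 (n-1), ∑ k' ∈ Finset.Icc 1 (k-1),
            s k * ((starRingEnd ℂ) (B (n-k)) * (w (k-k') * α k')).im := by
    rw [← Finset.sum_sub_distrib]
    refine Finset.sum_congr rfl fun k hk => ?_
    simp only [Finset.mem_Icc] at hk
    rw [hα k hk.1, mul_sub, Complex.sub_im, mul_sub, Finset.mul_sum, Complex.im_sum,
      Finset.mul_sum]
  have hBsym : ∑ k ∈ Finset.Icc 1 (n-1), s k * ((starRingEnd ℂ) (B (n-k)) * B k).im = 0 := by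
    have key : ∑ k ∈ Finset.Icc 1 (n-1), s k * ((starRingEnd ℂ) (B (n-k)) * B k).im
        = ∑ k ∈ Finset.Icc 1 (n-1), -(s k * ((starRingEnd ℂ) (B (n-k)) * B k).im) := by
      refine Finset.sum_nbij' (fun k => n - k) (fun k => n - k) ?_ ?_ ?_ ?_ ?_
      · intro k hk; simp only [Finset.mem_Icc] at hk ⊢; omega
      · intro k hk; simp only [Finset.mem_Icc] at hk ⊢; omega
      · intro k hk; simp only [Finset.mem_Icc] at hk; show n - (n - k) = k; omega
      · intro k hk; simp only [Finset.mem_Icc] at hk; show n - (n - k) = k; omega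
      · intro k hk
        simp only [Finset.mem_Icc] at hk
        have h1 : n - (n - k) = k := by omega
        have h2 : s (n - k) = s k := hsym n k hPn hk.1 hk.2
        rw [h1, h2]
        have h3 : (starRingEnd ℂ) (B k) * B (n - k)
            = (starRingEnd ℂ) ((starRingEnd ℂ) (B (n-k)) * B k) := by
          rw [map_mul, Complex.conj_conj]
          ring
        rw [h3, Complex.conj_im]
        ring
    have := key
    rw [Finset.sum_neg_distrib] at this
    linarith
  have hswap : ∑ k ∈ Finset.Icc 1 (n-1), ∑ k' ∈ Finset.Icc 1 (k-1),
        s k * ((starRingEnd ℂ) (B (n-k)) * (w (k-k') * α k')).im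
      = ∑ d ∈ Finset.Icc 1 (n-2), ∑ k' ∈ Finset.Icc 1 (n-1-d),
        s (k' + d) * ((starRingEnd ℂ) (B (n-d-k')) * (w d * α k')).im := by
    rw [← sum_swap_tri n (fun d k' => s (k' + d) * ((starRingEnd ℂ) (B (n-d-k')) * (w d * α k')).im)]
    refine Finset.sum_congr rfl fun k hk => Finset.sum_congr rfl fun k' hk' => ?_
    simp only [Finset.mem_Icc] at hk hk'
    have e1 : k' + (k - k') = k := by omega
    have e2 : n - (k - k') - k' = n - k := by omega
    rw [e1, e2]
  have hinner : ∀ d ∈ Finset.Icc 1 (n-2), ∑ k' ∈ Finset.Icc 1 (n-1-d),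
      s (k' + d) * ((starRingEnd ℂ) (B (n-d-k')) * (w d * α k')).im = 0 := by
    intro d hd
    simp only [Finset.mem_Icc] at hd
    by_cases hwd : w d = 0
    · simp [hwd]
    · obtain ⟨hPnd, hs⟩ := hP n d hPn hd.1 (by omega) hwd
      have hwim : (w d).im = 0 := hw n d hPn hd.1 (by omega)
      have hterm : ∀ k' ∈ Finset.Icc 1 (n-1-d),
          s (k' + d) * ((starRingEnd ℂ) (B (n-d-k')) * (w d * α k')).im
          = (w d).re * (s k' * ((starRingEnd ℂ) (B (n-d-k')) * α k').im) := by
        intro k' _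
        rw [hs k', mul_left_comm ((starRingEnd ℂ) (B (n-d-k'))) (w d) (α k'),
          Complex.mul_im, hwim]
        ring
      rw [Finset.sum_congr rfl hterm, ← Finset.mul_sum]
      have hIH := IH (n - d) (by omega) hPnd
      rw [show n - d - 1 = n - 1 - d from by omega] at hIH
      rw [show (∑ k' ∈ Finset.Icc 1 (n-1-d),
          s k' * ((starRingEnd ℂ) (B (n-d-k')) * α k').im) =
          (∑ k ∈ Finset.Icc 1 (n-1-d), s k * ((starRingEnd ℂ) (B (n-d-k)) * α k).im) from rfl,
        hIH, mul_zero]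
  rw [expand, hBsym, hswap, Finset.sum_congr rfl hinner]
  simp

lemma negOnePow_congr (p q : ℕ) (h : p % 2 = q % 2) : ((-1:ℝ))^p = (-1)^q := by
  rcases Nat.even_or_odd p with hp | hp
  · have hq : Even q := by rw [Nat.even_iff] at hp ⊢; omega
    rw [hp.neg_one_pow, hq.neg_one_pow]
  · have hq : Odd q := by rw [Nat.odd_iff] at hp ⊢; omega
    rw [hp.neg_one_pow, hq.neg_one_pow]

theorem lemma_la (m jstar : ℕ) (hm : 1 ≤ m) (hj : 1 ≤ jstar)
    (hjm : 2 * jstar + 3 ≤ 2 * m - 1)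
    (a b : ℕ → ℂ) (γ α : ℕ → ℂ) (lam lamp lamm : ℕ → ℝ)
    (hγ : ∀ j, 1 ≤ j →
      γ j = b (2 * j) - ∑ k ∈ Finset.Icc 1 (j - 1), (starRingEnd ℂ) (a (2 * (j - k))) * γ k)
    (hlam_even : ∀ j, 1 ≤ j →
      lam (2 * j) = 2 * (a (2 * j)).im
        - 2 * ∑ k ∈ Finset.Icc 1 (j - 1), ((starRingEnd ℂ) (b (2 * (j - k))) * γ k).im)
    (hα : ∀ j, 1 ≤ j →
      α j = b j - (1 / 2 : ℂ) * ∑ k ∈ Finset.Icc 1 (j - 1),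
        (1 + (-1 : ℂ) ^ (j - k)) * (starRingEnd ℂ) (a (j - k)) * α k)
    (hlamp : ∀ j, 1 ≤ j →
      lamp j = 2 * (a j).im
        + ∑ k ∈ Finset.Icc 1 (j - 1), (-1 : ℝ) ^ (j - k + 1) * ((starRingEnd ℂ) (b (j - k)) * α k).im)
    (hlamm : ∀ j, 1 ≤ j →
      lamm j = - ∑ k ∈ Finset.Icc 1 (j - 1), ((starRingEnd ℂ) (b (j - k)) * α k).im)
    (hvanish : ∀ j ∈ Finset.Icc 1 jstar, lam (2 * j) = 0) :
    (∀ j ∈ Finset.Icc 1 jstar, (a (2 * j)).im = 0 ∧ lamp (2 * j) = 0) ∧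
      (∀ n ∈ Finset.Icc 1 (2 * jstar + 3), lamm n = 0) := by
  -- Step 1 : Im a_{2j} = 0 for 1 ≤ j ≤ jstar, by strong induction
  have H1 : ∀ j, 1 ≤ j → j ≤ jstar → (a (2*j)).im = 0 := by
    intro j
    induction j using Nat.strong_induction_on with
    | _ j IH =>
    intro h1 hjle
    have hT : ∑ k ∈ Finset.Icc 1 (j-1),
        (fun _ : ℕ => (1:ℝ)) k * ((starRingEnd ℂ) ((fun i => b (2*i)) (j-k)) * γ k).im = 0 := by
      refine imS_zero (fun i => b (2*i)) (fun d => (starRingEnd ℂ) (a (2*d))) γ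
        (fun _ => (1:ℝ)) (fun i => i ≤ j) ?_ ?_ ?_ ?_ j le_rfl
      · intro i hi
        simpa using hγ i hi
      · intro n d _ _ hd2 _
        exact ⟨by omega, fun _ => rfl⟩
      · intro n k _ _ _; rfl
      · intro n d hn hd1 hd2
        have := IH d (by omega) hd1 (by omega)
        simp [Complex.conj_im, this]
    simp only [one_mul] at hT
    have hl := hlam_even j h1
    have hv := hvanish j (Finset.mem_Icc.mpr ⟨h1, hjle⟩)
    rw [hT] at hl
    linarith
  -- the weight for the α recursion
  set w : ℕ → ℂ := fun d => (1/2 : ℂ) * ((1 + (-1:ℂ)^d) * (starRingEnd ℂ) (a d)) with hw_def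
  have hα' : ∀ i, 1 ≤ i → α i = b i - ∑ k ∈ Finset.Icc 1 (i-1), w (i-k) * α k := by
    intro i hi
    rw [hα i hi, Finset.mul_sum]
    refine congrArg (fun z => b i - z) (Finset.sum_congr rfl fun k _ => by rw [hw_def]; ring)
  have hwodd : ∀ d, Odd d → w d = 0 := by
    intro d hd
    rw [hw_def]
    simp [hd.neg_one_pow]
  have hwim : ∀ d, 1 ≤ d → d ≤ 2*jstar+1 → (w d).im = 0 := by
    intro d hd1 hd2
    rcases Nat.even_or_odd d with hd | hd
    · have hde := hd
      obtain ⟨i, hi⟩ := hd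
      have him : (a d).im = 0 := by
        rw [hi]; rw [show i + i = 2 * i from by omega]
        exact H1 i (by omega) (by omega)
      have : w d = (starRingEnd ℂ) (a d) := by
        rw [hw_def]
        simp only []
        rw [hde.neg_one_pow]
        ring
      rw [this]
      simp [Complex.conj_im, him]
    · rw [hwodd d hd]; simp
  -- Step 2 : lamm n = 0 for 1 ≤ n ≤ 2 jstar + 3
  have H3 : ∀ n, 1 ≤ n → n ≤ 2*jstar+3 → lamm n = 0 := by
    intro n h1 h2
    have hS : ∑ k ∈ Finset.Icc 1 (n-1),
        (fun _ : ℕ => (1:ℝ)) k * ((starRingEnd ℂ) (b (n-k)) * α k).im = 0 := by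
      refine imS_zero b w α (fun _ => (1:ℝ)) (fun i => i ≤ 2*jstar+3) hα' ?_ ?_ ?_ n h2
      · intro n' d _ _ _ _
        exact ⟨by omega, fun _ => rfl⟩
      · intro n' k _ _ _; rfl
      · intro n' d hn' hd1 hd2
        exact hwim d hd1 (by omega)
    simp only [one_mul] at hS
    rw [hlamm n h1, hS, neg_zero]
  -- Step 3 : lamp (2j) = 0
  have H2 : ∀ j, 1 ≤ j → j ≤ jstar → lamp (2*j) = 0 := by
    intro j h1 hjle
    have hS : ∑ k ∈ Finset.Icc 1 (2*j-1),
        (fun k : ℕ => ((-1:ℝ))^(k+1)) k * ((starRingEnd ℂ) (b (2*j-k)) * α k).im = 0 := by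
      refine imS_zero b w α (fun k => ((-1:ℝ))^(k+1))
        (fun i => Even i ∧ i ≤ 2*jstar+3) hα' ?_ ?_ ?_ (2*j)
        ⟨even_two_mul j, by omega⟩
      · intro n' d hn' hd1 hd2 hne
        have hde : Even d := by
          rcases Nat.even_or_odd d with h | h
          · exact h
          · exact absurd (hwodd d h) hne
        refine ⟨⟨?_, by omega⟩, fun k => ?_⟩
        · have := hn'.1
          rw [Nat.even_iff] at this hde ⊢
          omega
        · show ((-1:ℝ))^(k+d+1) = ((-1:ℝ))^(k+1)
          rw [show k + d + 1 = (k+1) + d from by omega, pow_add, hde.neg_one_pow, mul_one]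
      · intro n' k hn' hk1 hk2
        refine negOnePow_congr _ _ ?_
        have := hn'.1
        rw [Nat.even_iff] at this
        omega
      · intro n' d hn' hd1 hd2
        exact hwim d hd1 (by omega)
    simp only [] at hS
    have hlp := hlamp (2*j) (by omega)
    have hsum : ∑ k ∈ Finset.Icc 1 (2*j-1),
        (-1:ℝ)^(2*j-k+1) * ((starRingEnd ℂ) (b (2*j-k)) * α k).im
        = ∑ k ∈ Finset.Icc 1 (2*j-1), ((-1:ℝ))^(k+1) * ((starRingEnd ℂ) (b (2*j-k)) * α k).im := by
      refine Finset.sum_congr rfl fun k hk => ?_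
      simp only [Finset.mem_Icc] at hk
      rw [negOnePow_congr (2*j-k+1) (k+1) (by omega)]
    rw [hlp, hsum, hS, H1 j h1 hjle]
    ring
  refine ⟨fun j hjj => ?_, fun n hnn => ?_⟩
  · simp only [Finset.mem_Icc] at hjj
    exact ⟨H1 j hjj.1 hjj.2, H2 j hjj.1 hjj.2⟩
  · simp only [Finset.mem_Icc] at hnn
    exact H3 n hnn.1 hnn.2
end

section
/- Assume λ_{2j} = 0 for all 1 ≤ j ≤ j*. Then λ_{2j*+2} = 2 Im a_{2j*+2} and λ_{2j*+4} = 2 Im a_{2j*+4}. -/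
noncomputable def Tsum (γ : ℕ → ℂ) (s : ℕ) : ℂ :=
  ∑ k ∈ Finset.Icc 1 (s - 1), (starRingEnd ℂ) (γ (s - k)) * γ k

noncomputable def Ssum (b γ : ℕ → ℂ) (J : ℕ) : ℝ :=
  ∑ k ∈ Finset.Icc 1 (J - 1), ((starRingEnd ℂ) (b (2 * (J - k))) * γ k).im

lemma Tsum_conj (γ : ℕ → ℂ) (s : ℕ) :
    (starRingEnd ℂ) (Tsum γ s) = Tsum γ s := by
  unfold Tsum
  rw [map_sum]
  refine Finset.sum_nbij' (fun k => s - k) (fun k => s - k) ?_ ?_ ?_ ?_ ?_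
  · intro k hk
    simp only [Finset.mem_Icc] at hk ⊢
    omega
  · intro k hk
    simp only [Finset.mem_Icc] at hk ⊢
    omega
  · intro k hk
    simp only [Finset.mem_Icc] at hk
    show s - (s - k) = k
    omega
  · intro k hk
    simp only [Finset.mem_Icc] at hk
    show s - (s - k) = k
    omega
  · intro k hk
    simp only [Finset.mem_Icc] at hk
    have h1 : s - (s - k) = k := by omega
    show (starRingEnd ℂ) ((starRingEnd ℂ) (γ (s - k)) * γ k) = _
    rw [map_mul, Complex.conj_conj, h1]
    ring

lemma Tsum_im (γ : ℕ → ℂ) (s : ℕ) : (Tsum γ s).im = 0 :=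
  Complex.conj_eq_iff_im.mp (Tsum_conj γ s)


lemma Ssum_eq (m : ℕ) (a b γ : ℕ → ℂ)
    (hγ : ∀ j ∈ Finset.Icc 1 (m - 1),
      γ j = b (2 * j) - ∑ k ∈ Finset.Icc 1 (j - 1), (starRingEnd ℂ) (a (2 * (j - k))) * γ k)
    (J : ℕ) (hJ : J ≤ m) :
    Ssum b γ J = ∑ j ∈ Finset.Icc 1 (J - 2), (a (2 * j)).im * (Tsum γ (J - j)).re := by
  have step1 : ∀ k ∈ Finset.Icc 1 (J - 1),
      ((starRingEnd ℂ) (b (2 * (J - k))) * γ k).im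
        = ((starRingEnd ℂ) (γ (J - k)) * γ k).im
          + ∑ l ∈ Finset.Icc 1 (J - k - 1),
              (a (2 * (J - k - l)) * ((starRingEnd ℂ) (γ l) * γ k)).im := by
    intro k hk
    simp only [Finset.mem_Icc] at hk
    have hmem : J - k ∈ Finset.Icc 1 (m - 1) := by
      simp only [Finset.mem_Icc]; omega
    have hb : b (2 * (J - k)) = γ (J - k)
        + ∑ l ∈ Finset.Icc 1 (J - k - 1), (starRingEnd ℂ) (a (2 * (J - k - l))) * γ l := by
      linear_combination -hγ (J - k) hmem
    rw [hb, map_add, map_sum, add_mul, Finset.sum_mul, Complex.add_im, Complex.im_sum]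
    congr 1
    refine Finset.sum_congr rfl fun l hl => ?_
    rw [map_mul, Complex.conj_conj]
    ring_nf
  rw [Ssum, Finset.sum_congr rfl step1, Finset.sum_add_distrib]
  have h0 : ∑ k ∈ Finset.Icc 1 (J - 1), ((starRingEnd ℂ) (γ (J - k)) * γ k).im = 0 := by
    rw [← Complex.im_sum]
    exact Tsum_im γ J
  rw [h0, zero_add]
  have hrhs : ∀ j ∈ Finset.Icc 1 (J - 2),
      (a (2 * j)).im * (Tsum γ (J - j)).re
        = ∑ k ∈ Finset.Icc 1 (J - j - 1),
            (a (2 * j) * ((starRingEnd ℂ) (γ (J - j - k)) * γ k)).im := by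
    intro j hj
    have : (a (2 * j)).im * (Tsum γ (J - j)).re = (a (2 * j) * Tsum γ (J - j)).im := by
      rw [Complex.mul_im, Tsum_im, mul_zero, zero_add]
    rw [this, Tsum, Finset.mul_sum, Complex.im_sum]
  rw [Finset.sum_congr rfl hrhs]
  rw [Finset.sum_sigma', Finset.sum_sigma']
  refine Finset.sum_nbij' (fun p => ⟨J - p.1 - p.2, p.1⟩) (fun p => ⟨p.2, J - p.1 - p.2⟩)
    ?_ ?_ ?_ ?_ ?_
  · rintro ⟨k, l⟩ hp
    simp only [Finset.mem_sigma, Finset.mem_Icc] at hp ⊢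
    omega
  · rintro ⟨j, k⟩ hp
    simp only [Finset.mem_sigma, Finset.mem_Icc] at hp ⊢
    omega
  · rintro ⟨k, l⟩ hp
    simp only [Finset.mem_sigma, Finset.mem_Icc] at hp
    simp only [Sigma.mk.inj_iff]
    exact ⟨by first | trivial | omega, heq_of_eq (by omega)⟩
  · rintro ⟨j, k⟩ hp
    simp only [Finset.mem_sigma, Finset.mem_Icc] at hp
    simp only [Sigma.mk.inj_iff]
    exact ⟨by first | trivial | omega, heq_of_eq (by omega)⟩
  · rintro ⟨k, l⟩ hp
    simp only [Finset.mem_sigma, Finset.mem_Icc] at hp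
    have h1 : J - (J - k - l) - k = l := by omega
    simp only [h1]

theorem rem_la (m jstar : ℕ) (hm : 1 ≤ m) (hj : 1 ≤ jstar) (hjm : jstar ≤ m - 3)
    (a b : ℕ → ℂ) (γ : ℕ → ℂ) (lam : ℕ → ℝ)
    (hγ : ∀ j ∈ Finset.Icc 1 (m - 1),
      γ j = b (2 * j) - ∑ k ∈ Finset.Icc 1 (j - 1), (starRingEnd ℂ) (a (2 * (j - k))) * γ k)
    (hlam_even : ∀ j ∈ Finset.Icc 1 (m - 1),
      lam (2 * j) = 2 * (a (2 * j)).im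
        - 2 * ∑ k ∈ Finset.Icc 1 (j - 1), ((starRingEnd ℂ) (b (2 * (j - k))) * γ k).im)
    (hvanish : ∀ j ∈ Finset.Icc 1 jstar, lam (2 * j) = 0) :
    lam (2 * jstar + 2) = 2 * (a (2 * jstar + 2)).im ∧
      lam (2 * jstar + 4) = 2 * (a (2 * jstar + 4)).im := by
  have hm4 : 4 ≤ m := by omega
  -- the correction sums vanish up to jstar + 2
  have Svanish : ∀ J, J ≤ jstar + 2 → Ssum b γ J = 0 := by
    intro J
    induction J using Nat.strong_induction_on with
    | _ J ih =>
      intro hJ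
      rw [Ssum_eq m a b γ hγ J (by omega)]
      refine Finset.sum_eq_zero fun j hj => ?_
      simp only [Finset.mem_Icc] at hj
      have hjv : lam (2 * j) = 0 := hvanish j (by simp only [Finset.mem_Icc]; omega)
      have hle : lam (2 * j) = 2 * (a (2 * j)).im - 2 * Ssum b γ j := by
        rw [hlam_even j (by simp only [Finset.mem_Icc]; omega)]; rfl
      have hSj : Ssum b γ j = 0 := ih j (by omega) (by omega)
      have : (a (2 * j)).im = 0 := by
        rw [hjv] at hle; rw [hSj] at hle; linarith
      rw [this, zero_mul]
  have key : ∀ J, 1 ≤ J → J ≤ jstar + 2 → lam (2 * J) = 2 * (a (2 * J)).im := by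
    intro J h1 h2
    rw [hlam_even J (by simp only [Finset.mem_Icc]; omega)]
    have : ∑ k ∈ Finset.Icc 1 (J - 1), ((starRingEnd ℂ) (b (2 * (J - k))) * γ k).im
        = Ssum b γ J := rfl
    rw [this, Svanish J h2, mul_zero, sub_zero]
  constructor
  · have h := key (jstar + 1) (by omega) (by omega)
    have e : 2 * (jstar + 1) = 2 * jstar + 2 := by ring
    rwa [e] at h
  · have h := key (jstar + 2) (by omega) (by omega)
    have e : 2 * (jstar + 2) = 2 * jstar + 4 := by ring
    rwa [e] at h
end
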